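/- arXiv:2108.00034 — 5 statements merged into one kernel-verified Lean document; each statement's English description precedes it below -/
import Mathlib

section
/- Let $\tau(a) \in (0,1)$ denote the unique maximizer of $g_a(\tau) = (1-\tau)(1-e^{-\tau/a})$ for $a>0$. Then $\tau(a) = a$ if and only if $a = 1/e$; moreover $\tau(a) > a$ for $0 < a < 1/e$ and $\tau(a) < a$ for $a > 1/e$. -/
open Real Set

/-- Let `τ(a) ∈ (0,1)` be the unique maximizer of `g_a(τ) = (1-τ)(1-e^{-τ/a})`
on `(0,1)`. Then `τ(a) = a ↔ a = 1/e`; moreover `τ(a) > a` for `0 < a < 1/e`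
and `τ(a) < a` for `a > 1/e`. -/
theorem optimal_training_vs_a
    (g : ℝ → ℝ → ℝ)
    (hg : ∀ a τ : ℝ, g a τ = (1 - τ) * (1 - Real.exp (-τ / a)))
    (τ : ℝ → ℝ)
    (hmem : ∀ a : ℝ, 0 < a → τ a ∈ Set.Ioo (0 : ℝ) 1)
    (hmax : ∀ a : ℝ, 0 < a → ∀ t ∈ Set.Ioo (0 : ℝ) 1, g a t ≤ g a (τ a))
    (huniq : ∀ a : ℝ, 0 < a → ∀ t ∈ Set.Ioo (0 : ℝ) 1,
      (∀ s ∈ Set.Ioo (0 : ℝ) 1, g a s ≤ g a t) → t = τ a) :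
    ∀ a : ℝ, 0 < a →
      ((τ a = a ↔ a = (Real.exp 1)⁻¹) ∧
        (a < (Real.exp 1)⁻¹ → a < τ a) ∧
        ((Real.exp 1)⁻¹ < a → τ a < a)) := by
  intro a ha
  obtain ⟨ht0, ht1⟩ := hmem a ha
  set t := τ a with htdef
  have hfun : g a = fun x : ℝ => (1 - x) * (1 - Real.exp (-x / a)) :=
    funext fun x => hg a x
  -- derivative at t
  have hder : HasDerivAt (g a)
      ((-1) * (1 - Real.exp (-t / a)) + (1 - t) * (-(Real.exp (-t / a) * (-1 / a)))) t := by
    rw [hfun]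
    have h1 : HasDerivAt (fun x : ℝ => 1 - x) (-1) t := by
      simpa using (hasDerivAt_id t).const_sub 1
    have h2 : HasDerivAt (fun x : ℝ => -x / a) (-1 / a) t := by
      simpa using ((hasDerivAt_id t).neg.div_const a)
    have h4 : HasDerivAt (fun x : ℝ => 1 - Real.exp (-x / a))
        (-(Real.exp (-t / a) * (-1 / a))) t := h2.exp.const_sub 1
    exact h1.mul h4
  have hloc : IsLocalMax (g a) t :=
    Filter.eventually_of_mem (Ioo_mem_nhds ht0 ht1) (fun s hs => hmax a ha s hs)
  have hzero := hloc.hasDerivAt_eq_zero hder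
  have hEF : Real.exp (-t / a) * Real.exp (t / a) = 1 := by
    rw [← Real.exp_add]; ring_nf; exact Real.exp_zero
  -- first-order condition:  1 - t = a (e^{t/a} - 1)
  have hkey : 1 - t = a * (Real.exp (t / a) - 1) := by
    have h6 : (1 - t) * Real.exp (-t / a) = a * (1 - Real.exp (-t / a)) := by
      field_simp at hzero
      rw [neg_div]
      nlinarith [hzero]
    have h7 : (1 - t) * Real.exp (-t / a) * Real.exp (t / a)
        = a * (1 - Real.exp (-t / a)) * Real.exp (t / a) := by rw [h6]
    nlinarith [h7, hEF]
  -- φ(x) = 1 - x - a(e^{x/a} - 1) is strictly decreasing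
  have hanti : ∀ x y : ℝ, x < y →
      1 - y - a * (Real.exp (y / a) - 1) < 1 - x - a * (Real.exp (x / a) - 1) := by
    intro x y hxy
    have hdiv : x / a < y / a := by gcongr
    nlinarith [Real.exp_lt_exp.mpr hdiv, ha]
  have hphit : 1 - t - a * (Real.exp (t / a) - 1) = 0 := by linarith
  have hphia : 1 - a - a * (Real.exp (a / a) - 1) = 1 - a * Real.exp 1 := by
    rw [div_self ha.ne']; ring
  have hepos := Real.exp_pos 1
  -- helper: sign of φ(a) = 1 - a e determines position of t relative to a
  have h_pos : 0 < 1 - a * Real.exp 1 → a < t := by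
    intro h
    by_contra hc
    push_neg at hc
    rcases eq_or_lt_of_le hc with h' | h'
    · have h2 := hphit
      rw [h'] at h2
      rw [hphia] at h2
      linarith
    · have h2 := hanti t a h'
      rw [hphit, hphia] at h2
      linarith
  have h_neg : 1 - a * Real.exp 1 < 0 → t < a := by
    intro h
    by_contra hc
    push_neg at hc
    rcases eq_or_lt_of_le hc with h' | h'
    · have h2 := hphit
      rw [← h'] at h2
      rw [hphia] at h2
      linarith
    · have h2 := hanti a t h'
      rw [hphit, hphia] at h2
      linarith
  have h_eq : 1 - a * Real.exp 1 = 0 → t = a := by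
    intro h
    rcases lt_trichotomy t a with h' | h' | h'
    · have h2 := hanti t a h'
      rw [hphit, hphia] at h2
      linarith
    · exact h'
    · have h2 := hanti a t h'
      rw [hphit, hphia] at h2
      linarith
  refine ⟨⟨fun hta => ?_, fun hae => ?_⟩, fun hlt => ?_, fun hlt => ?_⟩
  · -- t = a → a = e⁻¹
    have h2 := hphit
    rw [hta] at h2
    rw [hphia] at h2
    have h3 : a * Real.exp 1 = 1 := by linarith
    field_simp
    linarith
  · -- a = e⁻¹ → t = a
    apply h_eq
    rw [hae, inv_mul_cancel₀ hepos.ne']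
    ring
  · -- a < e⁻¹ → a < t
    apply h_pos
    have := mul_lt_mul_of_pos_right hlt hepos
    rw [inv_mul_cancel₀ hepos.ne'] at this
    linarith
  · -- e⁻¹ < a → t < a
    apply h_neg
    have := mul_lt_mul_of_pos_right hlt hepos
    rw [inv_mul_cancel₀ hepos.ne'] at this
    linarith
end

section
/- Let $\tau(a) \in (0,1)$ be the unique maximizer of $g_a(\tau) = (1-\tau)(1-e^{-\tau/a})$. Then $\lim_{a \to \infty} \tau(a) = 1/2$. -/
open Real Set Filter

/-- Let `τ(a) ∈ (0,1)` be the unique maximizer of `g_a(τ) = (1-τ)(1-e^{-τ/a})`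
on `(0,1)`. Then `τ(a) → 1/2` as `a → ∞`. -/
theorem optimal_training_tendsto_half
    (g : ℝ → ℝ → ℝ)
    (hg : ∀ a τ : ℝ, g a τ = (1 - τ) * (1 - Real.exp (-τ / a)))
    (τ : ℝ → ℝ)
    (hmem : ∀ a : ℝ, 0 < a → τ a ∈ Set.Ioo (0 : ℝ) 1)
    (hmax : ∀ a : ℝ, 0 < a → ∀ t ∈ Set.Ioo (0 : ℝ) 1, g a t ≤ g a (τ a))
    (huniq : ∀ a : ℝ, 0 < a → ∀ t ∈ Set.Ioo (0 : ℝ) 1,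
      (∀ s ∈ Set.Ioo (0 : ℝ) 1, g a s ≤ g a t) → t = τ a) :
    Tendsto τ atTop (nhds (1 / 2 : ℝ)) := by
  rw [Metric.tendsto_atTop]
  intro ε hε
  refine ⟨max 1 (1 / ε ^ 2), fun a ha => ?_⟩
  have ha1 : (1 : ℝ) ≤ a := le_trans (le_max_left _ _) ha
  have ha2 : 1 / ε ^ 2 ≤ a := le_trans (le_max_right _ _) ha
  have ha0 : (0 : ℝ) < a := by linarith
  have hae : 1 ≤ a * ε ^ 2 := (div_le_iff₀ (by positivity)).mp ha2
  obtain ⟨ht0, ht1⟩ := hmem a ha0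
  set t := τ a with htdef
  have h1 : g a (1 / 2) ≤ g a t := hmax a ha0 (1 / 2) (by norm_num)
  -- upper bound : g a t ≤ (1-t) * (t/a)
  have hup : g a t ≤ (1 - t) * (t / a) := by
    rw [hg]
    apply mul_le_mul_of_nonneg_left _ (by linarith)
    rw [neg_div]
    have h := Real.add_one_le_exp (-(t / a))
    linarith
  -- lower bound for g a (1/2)
  have hx : (0 : ℝ) < 1 + 1 / (2 * a) := by positivity
  have hexp : Real.exp (-(1 / 2) / a) ≤ 1 / (1 + 1 / (2 * a)) := by
    have h : 1 + 1 / (2 * a) ≤ Real.exp (1 / (2 * a)) := by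
      have := Real.add_one_le_exp (1 / (2 * a)); linarith
    have : (Real.exp (1 / (2 * a)))⁻¹ ≤ (1 + 1 / (2 * a))⁻¹ :=
      inv_anti₀ hx h
    rw [← Real.exp_neg] at this
    rw [show -(1 / 2) / a = -(1 / (2 * a)) by field_simp]
    simpa [one_div] using this
  have hlo : 1 / (2 * (2 * a + 1)) ≤ g a (1 / 2) := by
    rw [hg]
    have h2 : 1 / (1 + 1 / (2 * a)) = 2 * a / (2 * a + 1) := by field_simp
    rw [h2] at hexp
    have hden : (0 : ℝ) < 2 * a + 1 := by linarith
    have hsum : 2 * a / (2 * a + 1) + 1 / (2 * a + 1) = 1 := by field_simp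
    have h1e : 1 / (2 * (2 * a + 1)) = (1 - 1 / 2) * (1 / (2 * a + 1)) := by
      field_simp; ring
    rw [h1e]
    have h3 : 1 / (2 * a + 1) ≤ 1 - Real.exp (-(1 / 2) / a) := by linarith
    linarith
  have key : 1 / (2 * (2 * a + 1)) ≤ (1 - t) * (t / a) :=
    le_trans hlo (le_trans h1 hup)
  have key2 : a ≤ 2 * (2 * a + 1) * ((1 - t) * t) := by
    have h : (1 - t) * (t / a) = ((1 - t) * t) / a := by ring
    rw [h, div_le_div_iff₀ (by positivity) ha0] at key
    linarith [key]
  have hsq : (t - 1 / 2) ^ 2 < ε ^ 2 := by nlinarith [sq_nonneg (t - 1 / 2), sq_nonneg ε]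
  have habs : |t - 1 / 2| < ε :=
    lt_of_pow_lt_pow_left₀ 2 hε.le (by rwa [sq_abs])
  rwa [Real.dist_eq]
end

section
/- Let $\tau(a) \in (0,1)$ be the unique maximizer of $g_a(\tau) = (1-\tau)(1-e^{-\tau/a})$. Then $\lim_{a \searrow 0} \tau(a) = 0$ and $\lim_{a \searrow 0} \frac{\tau(a)}{-a \ln a} = 1$. -/
open Real Set Filter

private lemma tau_bounds_aux
    (g : ℝ → ℝ → ℝ)
    (hg : ∀ a τ : ℝ, g a τ = (1 - τ) * (1 - Real.exp (-τ / a)))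
    (τ : ℝ → ℝ)
    (hmem : ∀ a : ℝ, 0 < a → τ a ∈ Set.Ioo (0 : ℝ) 1)
    (hmax : ∀ a : ℝ, 0 < a → ∀ t ∈ Set.Ioo (0 : ℝ) 1, g a t ≤ g a (τ a))
    {a : ℝ} (ha : a ∈ Set.Ioo (0:ℝ) 1) :
    -(a * Real.log a) - a * Real.log (1 - Real.log a) ≤ τ a ∧
      τ a ≤ a - a * Real.log a := by
  obtain ⟨ha0, ha1⟩ := ha
  have hla : Real.log a < 0 := Real.log_neg ha0 ha1
  have ht0pos : 0 < -(a * Real.log a) := by nlinarith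
  have hlogle : Real.log (1/a) ≤ 1/a - 1 := Real.log_le_sub_one_of_pos (by positivity)
  have ht0lt : -(a * Real.log a) < 1 := by
    rw [Real.log_div one_ne_zero (ne_of_gt ha0), Real.log_one] at hlogle
    have : -Real.log a ≤ 1/a - 1 := by linarith
    calc -(a * Real.log a) = a * (-Real.log a) := by ring
    _ ≤ a * (1/a - 1) := by nlinarith
    _ = 1 - a := by field_simp
    _ < 1 := by linarith
  have hkey := hmax a ha0 (-(a * Real.log a)) ⟨ht0pos, ht0lt⟩
  rw [hg, hg] at hkey
  have hexp0 : Real.exp (-(-(a * Real.log a)) / a) = a := by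
    rw [show -(-(a * Real.log a)) / a = Real.log a by field_simp]
    exact Real.exp_log ha0
  rw [hexp0] at hkey
  obtain ⟨hτ0, hτ1⟩ := hmem a ha0
  set t := τ a with ht
  set E := Real.exp (-t / a) with hE
  have hE0 : 0 < E := Real.exp_pos _
  have hE1 : E < 1 := by
    rw [hE, Real.exp_lt_one_iff]
    exact div_neg_of_neg_of_pos (by linarith) ha0
  have hkey' : (1 - -(a * Real.log a)) * (1 - a) ≤ (1 - t) * (1 - E) := hkey
  constructor
  · have hEle : E ≤ a * (1 - Real.log a) := by nlinarith
    have hpos : (0:ℝ) < a * (1 - Real.log a) := by nlinarith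
    have hlogE : -t / a ≤ Real.log (a * (1 - Real.log a)) := by
      have := Real.log_le_log hE0 hEle
      rwa [hE, Real.log_exp] at this
    rw [Real.log_mul (ne_of_gt ha0) (by nlinarith)] at hlogE
    have : -t ≤ a * (Real.log a + Real.log (1 - Real.log a)) := by
      calc -t = a * (-t / a) := by field_simp
      _ ≤ _ := by nlinarith
    linarith [this]
  · nlinarith

open Asymptotics in
private lemma lim_log1p_aux : Tendsto (fun x : ℝ => Real.log (1 + x) / x) atTop (nhds 0) := by
  have h1 : (fun x : ℝ => Real.log (1 + x)) =o[atTop] (fun x => 1 + x) :=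
    Real.isLittleO_log_id_atTop.comp_tendsto (tendsto_atTop_add_const_left _ 1 tendsto_id)
  have h2 : (fun x : ℝ => 1 + x) =O[atTop] (fun x => x) := by
    rw [Asymptotics.isBigO_iff]
    refine ⟨2, ?_⟩
    filter_upwards [eventually_ge_atTop (1:ℝ)] with x hx
    rw [Real.norm_eq_abs, Real.norm_eq_abs, abs_of_pos (by linarith), abs_of_pos (by linarith)]
    linarith
  exact (h1.trans_isBigO h2).tendsto_div_nhds_zero

private lemma lim_neg_log_aux :
    Tendsto (fun a : ℝ => -Real.log a) (nhdsWithin 0 (Set.Ioi 0)) atTop :=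
  tendsto_neg_atBot_atTop.comp Real.tendsto_log_nhdsGT_zero

private lemma limA_aux : Tendsto (fun a : ℝ => 1 + Real.log (1 - Real.log a) / Real.log a)
    (nhdsWithin 0 (Set.Ioi 0)) (nhds 1) := by
  have h := (lim_log1p_aux.comp lim_neg_log_aux).neg
  have heq : (fun a : ℝ => -(Real.log (1 + -Real.log a) / -Real.log a))
      = fun a : ℝ => Real.log (1 - Real.log a) / Real.log a := by
    funext a
    rw [sub_eq_add_neg]
    rw [div_neg, neg_neg]
  rw [show ((fun x : ℝ => Real.log (1 + x) / x) ∘ fun a : ℝ => -Real.log a)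
      = (fun a : ℝ => Real.log (1 + -Real.log a) / -Real.log a) from rfl] at h
  rw [heq] at h
  have := (tendsto_const_nhds (x := (1:ℝ)) (f := nhdsWithin (0:ℝ) (Set.Ioi 0))).add h
  simpa using this

private lemma limB_aux : Tendsto (fun a : ℝ => 1 - 1 / Real.log a)
    (nhdsWithin 0 (Set.Ioi 0)) (nhds 1) := by
  have h : Tendsto (fun a : ℝ => 1 / Real.log a) (nhdsWithin 0 (Set.Ioi 0)) (nhds 0) := by
    have h0 := lim_neg_log_aux.inv_tendsto_atTop
    have h1 := h0.neg
    refine h1.congr' ?_ |>.mono_right (by simp)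
    filter_upwards with a
    simp [Pi.inv_apply, one_div, inv_neg]
  have := (tendsto_const_nhds (x := (1:ℝ)) (f := nhdsWithin (0:ℝ) (Set.Ioi 0))).sub h
  simpa using this

private lemma lim_upper_aux :
    Tendsto (fun a : ℝ => a - a * Real.log a) (nhdsWithin 0 (Set.Ioi 0)) (nhds 0) := by
  have h : Tendsto (fun a : ℝ => a * Real.log a) (nhds 0) (nhds 0) := by
    have := Real.continuous_mul_log.tendsto 0
    simpa using this
  have h2 := (tendsto_id.sub h).mono_left (nhdsWithin_le_nhds (s := Set.Ioi (0:ℝ)))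
  simpa using h2

/-- Let `τ(a) ∈ (0,1)` be the unique maximizer of `g_a(τ) = (1-τ)(1-e^{-τ/a})`
on `(0,1)`. Then `τ(a) → 0` as `a ↘ 0`, and `τ(a) / (-a ln a) → 1` as `a ↘ 0`. -/
theorem optimal_training_small_a_asymptotics
    (g : ℝ → ℝ → ℝ)
    (hg : ∀ a τ : ℝ, g a τ = (1 - τ) * (1 - Real.exp (-τ / a)))
    (τ : ℝ → ℝ)
    (hmem : ∀ a : ℝ, 0 < a → τ a ∈ Set.Ioo (0 : ℝ) 1)
    (hmax : ∀ a : ℝ, 0 < a → ∀ t ∈ Set.Ioo (0 : ℝ) 1, g a t ≤ g a (τ a))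
    (huniq : ∀ a : ℝ, 0 < a → ∀ t ∈ Set.Ioo (0 : ℝ) 1,
      (∀ s ∈ Set.Ioo (0 : ℝ) 1, g a s ≤ g a t) → t = τ a) :
    Tendsto τ (nhdsWithin 0 (Set.Ioi 0)) (nhds (0 : ℝ)) ∧
      Tendsto (fun a : ℝ => τ a / (-(a * Real.log a)))
        (nhdsWithin 0 (Set.Ioi 0)) (nhds (1 : ℝ)) := by
  have hIoo : Set.Ioo (0:ℝ) 1 ∈ nhdsWithin (0:ℝ) (Set.Ioi 0) :=
    Ioo_mem_nhdsGT_of_mem (by simp)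
  constructor
  · refine tendsto_of_tendsto_of_tendsto_of_le_of_le' tendsto_const_nhds lim_upper_aux ?_ ?_
    · filter_upwards [hIoo] with a ha
      exact (hmem a ha.1).1.le
    · filter_upwards [hIoo] with a ha
      exact (tau_bounds_aux g hg τ hmem hmax ha).2
  · refine tendsto_of_tendsto_of_tendsto_of_le_of_le' limA_aux limB_aux ?_ ?_
    · filter_upwards [hIoo] with a ha
      obtain ⟨hL, _⟩ := tau_bounds_aux g hg τ hmem hmax ha
      have hla : Real.log a < 0 := Real.log_neg ha.1 ha.2
      have hD : 0 < -(a * Real.log a) := by nlinarith [ha.1]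
      have hlane : Real.log a ≠ 0 := ne_of_lt hla
      have hane : a ≠ 0 := ne_of_gt ha.1
      have h1 : (-(a * Real.log a) - a * Real.log (1 - Real.log a)) / (-(a * Real.log a))
          ≤ τ a / (-(a * Real.log a)) := by gcongr
      calc 1 + Real.log (1 - Real.log a) / Real.log a
          = (-(a * Real.log a) - a * Real.log (1 - Real.log a)) / (-(a * Real.log a)) := by
            field_simp [hlane, hane]
            ring
        _ ≤ _ := h1
    · filter_upwards [hIoo] with a ha
      obtain ⟨_, hU⟩ := tau_bounds_aux g hg τ hmem hmax ha
      have hla : Real.log a < 0 := Real.log_neg ha.1 ha.2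
      have hD : 0 < -(a * Real.log a) := by nlinarith [ha.1]
      have hlane : Real.log a ≠ 0 := ne_of_lt hla
      have hane : a ≠ 0 := ne_of_gt ha.1
      have h1 : τ a / (-(a * Real.log a)) ≤ (a - a * Real.log a) / (-(a * Real.log a)) := by
        gcongr
      calc τ a / (-(a * Real.log a)) ≤ (a - a * Real.log a) / (-(a * Real.log a)) := h1
        _ = 1 - 1 / Real.log a := by
            field_simp [hlane, hane]
            ring
end

section
/- Let $(f_t)_{t \ge 1}$ be a sequence of reals, and suppose $f_t$ is monotonically decreasing in $t$ and $\lim_{T\to\infty} f_{\lceil \varepsilon T\rceil + 1}$ exists for $\varepsilon > 0$, defining $L(\varepsilon)$. If additionally $H(\varepsilon) := \lim_{T\to\infty} \frac{1}{T}\sum_{t=1}^{\lceil \varepsilon T\rceil} f_t$ exists and is differentiable at $\varepsilon_0 > 0$, then $H'(\varepsilon_0) = L(\varepsilon_0)$. -/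
open Real Set Filter Finset
open Topology

lemma ceil_div_tendsto {ε : ℝ} (hε : 0 ≤ ε) :
    Tendsto (fun T : ℕ => (⌈ε * (T : ℝ)⌉₊ : ℝ) / T) atTop (nhds ε) := by
  have hupper : Tendsto (fun T : ℕ => ε + 1 / (T : ℝ)) atTop (nhds ε) := by
    simpa using tendsto_const_nhds.add (tendsto_one_div_atTop_nhds_zero_nat (𝕜 := ℝ))
  refine tendsto_of_tendsto_of_tendsto_of_le_of_le' tendsto_const_nhds hupper ?_ ?_
  · filter_upwards [eventually_ge_atTop 1] with T hT
    have hT0 : (0:ℝ) < T := by exact_mod_cast hT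
    rw [le_div_iff₀ hT0]
    exact Nat.le_ceil _
  · filter_upwards [eventually_ge_atTop 1] with T hT
    have hT0 : (0:ℝ) < T := by exact_mod_cast hT
    rw [div_le_iff₀ hT0]
    have h1 : (⌈ε * (T:ℝ)⌉₊ : ℝ) < ε * T + 1 :=
      Nat.ceil_lt_add_one (by positivity)
    have : (ε + 1 / T) * T = ε * T + 1 := by field_simp
    linarith

lemma key_ineq (f : ℕ → ℝ) (hf : Antitone f)
    (L H : ℝ → ℝ)
    (hL : ∀ ε : ℝ, 0 < ε →
      Tendsto (fun T : ℕ => f (⌈ε * (T : ℝ)⌉₊ + 1)) atTop (nhds (L ε)))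
    (hH : ∀ ε : ℝ, 0 < ε →
      Tendsto (fun T : ℕ => (∑ t ∈ Finset.Icc 1 ⌈ε * (T : ℝ)⌉₊, f t) / (T : ℝ))
        atTop (nhds (H ε)))
    {ε ε' : ℝ} (h0 : 0 < ε) (hlt : ε < ε') :
    (ε' - ε) * L ε' ≤ H ε' - H ε ∧ H ε' - H ε ≤ (ε' - ε) * L ε := by
  have h0' : 0 < ε' := h0.trans hlt
  set a : ℕ → ℕ := fun T => ⌈ε * (T : ℝ)⌉₊ with ha
  set b : ℕ → ℕ := fun T => ⌈ε' * (T : ℝ)⌉₊ with hb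
  have hab : ∀ T : ℕ, a T ≤ b T := fun T =>
    Nat.ceil_le_ceil (mul_le_mul_of_nonneg_right hlt.le (Nat.cast_nonneg T))
  -- limit of count / T
  have hcount : Tendsto (fun T : ℕ => ((b T - a T : ℕ) : ℝ) / T) atTop (nhds (ε' - ε)) := by
    have := (ceil_div_tendsto h0'.le).sub (ceil_div_tendsto h0.le)
    refine this.congr fun T => ?_
    rw [Nat.cast_sub (hab T), sub_div]
  -- limit of the sum difference
  have hdiff : Tendsto (fun T : ℕ => (∑ t ∈ Finset.Ioc (a T) (b T), f t) / T) atTop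
      (nhds (H ε' - H ε)) := by
    have := (hH ε' h0').sub (hH ε h0)
    refine this.congr fun T => ?_
    have : ∑ t ∈ Finset.Ioc 0 (a T), f t + ∑ t ∈ Finset.Ioc (a T) (b T), f t
        = ∑ t ∈ Finset.Ioc 0 (b T), f t :=
      Finset.sum_Ioc_consecutive f (Nat.zero_le _) (hab T)
    have h1 : Finset.Icc 1 (a T) = Finset.Ioc 0 (a T) := by
      rw [← Finset.Icc_add_one_left_eq_Ioc, zero_add]
    have h2 : Finset.Icc 1 (b T) = Finset.Ioc 0 (b T) := by
      rw [← Finset.Icc_add_one_left_eq_Ioc, zero_add]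
    rw [h1, h2, ← sub_div]
    congr 1
    linarith
  constructor
  · -- lower bound: count/T * f(b+1) ≤ sum/T
    have hlow : Tendsto (fun T : ℕ => ((b T - a T : ℕ) : ℝ) / T * f (b T + 1)) atTop
        (nhds ((ε' - ε) * L ε')) := hcount.mul (hL ε' h0')
    refine le_of_tendsto_of_tendsto hlow hdiff ?_
    filter_upwards [eventually_ge_atTop 1] with T hT
    have hT0 : (0:ℝ) < T := by exact_mod_cast hT
    have hsum : ((b T - a T : ℕ) : ℝ) * f (b T + 1) ≤ ∑ t ∈ Finset.Ioc (a T) (b T), f t := by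
      have := Finset.card_nsmul_le_sum (Finset.Ioc (a T) (b T)) f (f (b T + 1))
        (fun x hx => hf (Nat.le_succ_of_le (Finset.mem_Ioc.mp hx).2))
      simpa [Nat.card_Ioc, nsmul_eq_mul] using this
    rw [div_mul_eq_mul_div, div_le_div_iff₀ hT0 hT0]
    nlinarith
  · have hup : Tendsto (fun T : ℕ => ((b T - a T : ℕ) : ℝ) / T * f (a T + 1)) atTop
        (nhds ((ε' - ε) * L ε)) := hcount.mul (hL ε h0)
    refine le_of_tendsto_of_tendsto hdiff hup ?_
    filter_upwards [eventually_ge_atTop 1] with T hT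
    have hT0 : (0:ℝ) < T := by exact_mod_cast hT
    have hsum : ∑ t ∈ Finset.Ioc (a T) (b T), f t ≤ ((b T - a T : ℕ) : ℝ) * f (a T + 1) := by
      have := Finset.sum_le_card_nsmul (Finset.Ioc (a T) (b T)) f (f (a T + 1))
        (fun x hx => hf (Finset.mem_Ioc.mp hx).1)
      simpa [Nat.card_Ioc, nsmul_eq_mul] using this
    rw [div_mul_eq_mul_div, div_le_div_iff₀ hT0 hT0]
    nlinarith

/-- Deterministic core of Theorem 3: if `f` is a decreasing real sequence,
`L ε = lim_T f_{⌈εT⌉+1}` exists for all `ε > 0`, and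
`H ε = lim_T (1/T) ∑_{t=1}^{⌈εT⌉} f_t` exists and is differentiable at
`ε₀ > 0`, then `H'(ε₀) = L(ε₀)`. -/
theorem deriv_eq_inner_limit
    (f : ℕ → ℝ) (hf : Antitone f)
    (L H : ℝ → ℝ)
    (hL : ∀ ε : ℝ, 0 < ε →
      Tendsto (fun T : ℕ => f (⌈ε * (T : ℝ)⌉₊ + 1)) atTop (nhds (L ε)))
    (hH : ∀ ε : ℝ, 0 < ε →
      Tendsto (fun T : ℕ => (∑ t ∈ Finset.Icc 1 ⌈ε * (T : ℝ)⌉₊, f t) / (T : ℝ))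
        atTop (nhds (H ε)))
    (ε₀ : ℝ) (hε₀ : 0 < ε₀) (hdiff : DifferentiableAt ℝ H ε₀) :
    deriv H ε₀ = L ε₀ := by
  have hslope : Tendsto (slope H ε₀) (𝓝[≠] ε₀) (nhds (deriv H ε₀)) :=
    hasDerivAt_iff_tendsto_slope.mp hdiff.hasDerivAt
  have hright : Tendsto (slope H ε₀) (𝓝[>] ε₀) (nhds (deriv H ε₀)) :=
    hslope.mono_left (nhdsWithin_mono _ fun x hx => ne_of_gt hx)
  have hleft : Tendsto (slope H ε₀) (𝓝[<] ε₀) (nhds (deriv H ε₀)) :=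
    hslope.mono_left (nhdsWithin_mono _ fun x hx => ne_of_lt hx)
  have hub : deriv H ε₀ ≤ L ε₀ := by
    refine le_of_tendsto hright ?_
    filter_upwards [eventually_mem_nhdsWithin] with x (hx : x ∈ Ioi ε₀)
    have hk := (key_ineq f hf L H hL hH hε₀ hx).2
    rw [slope_def_field]
    rw [div_le_iff₀ (by simpa using sub_pos.mpr (mem_Ioi.mp hx))]
    linarith
  have hlb : L ε₀ ≤ deriv H ε₀ := by
    refine ge_of_tendsto hleft ?_
    filter_upwards [Ioo_mem_nhdsLT_of_mem (by simp [hε₀] : ε₀ ∈ Ioc 0 ε₀)] with x hx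
    have hk := (key_ineq f hf L H hL hH hx.1 hx.2).1
    rw [slope_def_field]
    have hxlt : x - ε₀ < 0 := sub_neg.mpr hx.2
    rw [le_div_iff_of_neg hxlt]
    linarith
  linarith
end

section
/- Let $\tau(a)$ be the unique maximizer of $g_a(\tau) = (1-\tau)(1-e^{-\tau/a})$ on $(0,1)$ and let $R(a) = g_a(\tau(a))$ be the optimal rate. Then $\lim_{a \to \infty} a \cdot R(a) = 1/4$. -/
open Real Set Filter

lemma lower_limit : Tendsto (fun a : ℝ => a * ((1/2) * (1 - Real.exp (-(1/2)/a))))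
    atTop (nhds (1/4 : ℝ)) := by
  have hexp : HasDerivAt Real.exp 1 0 := by simpa using Real.hasDerivAt_exp 0
  have hslope : Tendsto (slope Real.exp 0) (nhdsWithin 0 {(0:ℝ)}ᶜ) (nhds 1) :=
    hasDerivAt_iff_tendsto_slope.mp hexp
  have hy : Tendsto (fun a : ℝ => -(1/2)/a) atTop (nhdsWithin 0 {(0:ℝ)}ᶜ) := by
    rw [tendsto_nhdsWithin_iff]
    constructor
    · have : Tendsto (fun a : ℝ => -(1/2)/a) atTop (nhds 0) := by
        simpa using (tendsto_const_nhds.div_atTop (f := fun _ : ℝ => (-(1/2):ℝ)) tendsto_id)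
      exact this
    · filter_upwards [eventually_gt_atTop (0:ℝ)] with a ha
      simp only [Set.mem_compl_iff, Set.mem_singleton_iff]
      intro h
      have := div_eq_zero_iff.mp h
      rcases this with h1 | h2 <;> [norm_num at h1; exact ha.ne' h2]
  have hcomp : Tendsto (fun a : ℝ => slope Real.exp 0 (-(1/2)/a)) atTop (nhds 1) :=
    hslope.comp hy
  have heq : ∀ᶠ a : ℝ in atTop,
      (1/4 : ℝ) * slope Real.exp 0 (-(1/2)/a) = a * ((1/2) * (1 - Real.exp (-(1/2)/a))) := by
    filter_upwards [eventually_gt_atTop (0:ℝ)] with a ha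
    have hne : (-(1/2)/a : ℝ) ≠ 0 := by
      apply div_ne_zero <;> [norm_num; exact ne_of_gt ha]
    rw [slope_def_field, Real.exp_zero]
    field_simp
    ring
  have := (hcomp.const_mul (1/4 : ℝ)).congr' heq
  simpa using this

/-- Let `τ(a) ∈ (0,1)` be the unique maximizer of `g_a(τ) = (1-τ)(1-e^{-τ/a})`
on `(0,1)` and `R(a) = g_a(τ(a))` the optimal rate. Then `a · R(a) → 1/4` as
`a → ∞`. -/
theorem optimal_rate_asymptotics
    (g : ℝ → ℝ → ℝ)
    (hg : ∀ a τ : ℝ, g a τ = (1 - τ) * (1 - Real.exp (-τ / a)))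
    (τ : ℝ → ℝ)
    (hmem : ∀ a : ℝ, 0 < a → τ a ∈ Set.Ioo (0 : ℝ) 1)
    (hmax : ∀ a : ℝ, 0 < a → ∀ t ∈ Set.Ioo (0 : ℝ) 1, g a t ≤ g a (τ a))
    (huniq : ∀ a : ℝ, 0 < a → ∀ t ∈ Set.Ioo (0 : ℝ) 1,
      (∀ s ∈ Set.Ioo (0 : ℝ) 1, g a s ≤ g a t) → t = τ a)
    (R : ℝ → ℝ) (hR : ∀ a : ℝ, R a = g a (τ a)) :
    Tendsto (fun a : ℝ => a * R a) atTop (nhds (1 / 4 : ℝ)) := by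
  apply tendsto_of_tendsto_of_tendsto_of_le_of_le' lower_limit tendsto_const_nhds
  · -- lower bound eventually
    filter_upwards [eventually_gt_atTop (0:ℝ)] with a ha
    have h12 : (1/2 : ℝ) ∈ Set.Ioo (0:ℝ) 1 := by norm_num
    have := hmax a ha (1/2) h12
    rw [hg a (1/2)] at this
    rw [hR a]
    have : (1/2 : ℝ) * (1 - Real.exp (-(1/2)/a)) ≤ g a (τ a) := by
      convert this using 2
      norm_num
    nlinarith [this]
  · -- upper bound eventually
    filter_upwards [eventually_gt_atTop (0:ℝ)] with a ha
    obtain ⟨ht0, ht1⟩ := hmem a ha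
    set t := τ a
    rw [hR a, hg a t]
    have hexp : 1 - t / a ≤ Real.exp (-t/a) := by
      rw [neg_div]
      linarith [Real.add_one_le_exp (-(t/a))]
    have h1 : 1 - Real.exp (-t/a) ≤ t / a := by linarith
    have hpos : (0:ℝ) ≤ 1 - t := by linarith
    have h2 : (1 - t) * (1 - Real.exp (-t/a)) ≤ (1 - t) * (t / a) :=
      mul_le_mul_of_nonneg_left h1 hpos
    have h3 : (1 - t) * t ≤ 1/4 := by nlinarith [sq_nonneg (t - 1/2)]
    have h4 : (1 - t) * (t / a) ≤ 1/(4*a) := by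
      rw [show (1:ℝ)/(4*a) = (1/4)/a by ring, show (1-t)*(t/a) = ((1-t)*t)/a by ring]
      gcongr
    calc a * ((1 - t) * (1 - Real.exp (-t/a))) ≤ a * (1/(4*a)) := by
          apply mul_le_mul_of_nonneg_left (le_trans h2 h4) (le_of_lt ha)
      _ = 1/4 := by field_simp
end
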